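/- Let a ∈ (0,1] and μ ∈ (a²/(1+a²), 1), and let φ(z;κ) = (κ−μ)log z + (1−μ)log(1−az) + μ log(z+a) (principal branches). Set x* = (κ₂ + a²(2μ−κ₂−1))/(2a(1+κ₂−μ)) and c* = μ − κ₂ + a³(1−μ)/(1/x* − a)³ − μ/(1 + a/x*)³. Then: (i) x* ∈ (0, 1/a), and if (1+a²)μ ≠ 1 then x* = (a − (1+a²)√(μ(1−μ)))/((1+a²)μ − 1); (ii) φ′(x*;κ₂) = 0, φ″(x*;κ₂) = 0 and φ‴(x*;κ₂) < 0; (iii) c* > 0 and c* = −(x*)³·φ‴(x*;κ₂)/2. -/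

import Mathlib

open Real Set MeasureTheory Filter

noncomputable section

/-- A domino: lower-left corner `(x, y)` and orientation
(`vertical = true` means a `1 × 2` rectangle). -/
structure Domino where
  x : ℤ
  y : ℤ
  vertical : Bool
deriving DecidableEq

/-- The closed planar region covered by a domino. -/
def Domino.region (d : Domino) : Set (ℝ × ℝ) :=
  if d.vertical then Set.Icc (d.x : ℝ) ((d.x : ℝ) + 1) ×ˢ Set.Icc (d.y : ℝ) ((d.y : ℝ) + 2)
  else Set.Icc (d.x : ℝ) ((d.x : ℝ) + 2) ×ˢ Set.Icc (d.y : ℝ) ((d.y : ℝ) + 1)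

/-- `T` is a domino tiling of the region `R`: the dominoes cover exactly `R`
and have pairwise disjoint interiors. -/
def IsTiling (R : Set (ℝ × ℝ)) (T : Finset Domino) : Prop :=
  (⋃ d ∈ T, d.region) = R ∧
    ∀ d ∈ T, ∀ d' ∈ T, d ≠ d' → interior d.region ∩ interior d'.region = ∅

/-- Number of vertical dominoes of a tiling. -/
def vertCount (T : Finset Domino) : ℕ := (T.filter fun d => d.vertical = true).card

/-- The closed unit square with lower-left corner `(i, j)`. -/
def unitSquare (i j : ℤ) : Set (ℝ × ℝ) :=
  Set.Icc (i : ℝ) ((i : ℝ) + 1) ×ˢ Set.Icc (j : ℝ) ((j : ℝ) + 1)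

/-- The Aztec diamond `A_N`. -/
def AztecDiamond (N : ℤ) : Set (ℝ × ℝ) :=
  ⋃₀ {S | ∃ i j : ℤ, S = unitSquare i j ∧
      S ⊆ {p : ℝ × ℝ | |p.1| + |p.2| ≤ (N : ℝ) + 1}}

/-- The L-shaped region `A_N^{m,k}`. -/
def AztecL (N m k : ℤ) : Set (ℝ × ℝ) :=
  ⋃₀ {S | ∃ i j : ℤ, S = unitSquare i j ∧
      S ⊆ {p : ℝ × ℝ | |p.1| + |p.2| ≤ (N : ℝ) + 1 ∧
        p.2 ≤ max (2*(m:ℝ) - 1 - (N:ℝ) - p.1) (p.1 - 2*(m:ℝ) - 1 + (N:ℝ) + 2*(k:ℝ))}}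

/-- The modified region `Ã_N^{m,k}`. -/
def AztecLtilde (N m k : ℤ) : Set (ℝ × ℝ) :=
  if m = N then AztecDiamond N
  else AztecL N (m+1) (k+1) \
      ({(2*(m:ℝ) + (k:ℝ) - (N:ℝ) - 1)} ×ˢ Set.Icc ((k:ℝ) - 1) (k:ℝ))

/-- Weighted count of domino tilings of a region: `Σ_T a^{v(T)}`. -/
def tilingSum (R : Set (ℝ × ℝ)) (a : ℝ) : ℝ :=
  ∑ᶠ T ∈ {T : Finset Domino | IsTiling R T}, a ^ vertCount T

/-- `F_N^{m,k}(a; ε)`. -/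
def Fcnt (N m k : ℤ) (a : ℝ) (ε : ℕ) : ℝ :=
  if ε = 1 then tilingSum (AztecL N m k) a else tilingSum (AztecLtilde N m k) a

/-- `F_N(a)`. -/
def FAztec (N : ℤ) (a : ℝ) : ℝ := tilingSum (AztecDiamond N) a

/-- `κ₂(μ)`. -/
def kappa2 (a μ : ℝ) : ℝ := (a^2*(2*μ - 1) + 2*a*Real.sqrt (μ*(1-μ)))/(1+a^2)

/-- `x₀(μ)`. -/
def x0 (a μ : ℝ) : ℝ := (-a - Real.sqrt (a^2 + 4*μ*(1-μ)))/(2*(1-μ))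

/-- `φ₀` (real form, valid at `x₀ < -a`). -/
def phi0 (a μ x : ℝ) : ℝ := (1-μ)*Real.log (1 - a*x) + μ*Real.log (x/(x+a))

/-- `φ₀''(x₀)`. -/
def phi0'' (a μ : ℝ) : ℝ := iteratedDeriv 2 (phi0 a μ) (x0 a μ)

/-- `x*`. -/
def xstar (a μ : ℝ) : ℝ :=
  (kappa2 a μ + a^2*(2*μ - kappa2 a μ - 1))/(2*a*(1 + kappa2 a μ - μ))

/-- `c*`. -/
def cstar (a μ : ℝ) : ℝ :=
  μ - kappa2 a μ + a^3*(1-μ)/(1/(xstar a μ) - a)^3 - μ/(1 + a/(xstar a μ))^3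

/-- `ζ'(-1)`. -/
def zetaDerivNeg1 : ℝ := (deriv riemannZeta (-1)).re

/-- The defining property of `z₀(κ, μ)`. -/
def z0spec (a κ μ : ℝ) (z : ℂ) : Prop :=
  0 < z.im ∧
  (1-μ)/‖z - 1/(a:ℂ)‖ + (μ-κ)/‖z‖ - μ/‖z + (a:ℂ)‖ = 0 ∧
  κ + 1 - μ - a*μ/‖z + (a:ℂ)‖ - (1-μ)/(a * ‖z - 1/(a:ℂ)‖) = 0

/-- `z₀(κ, μ)`, defined by choice from its defining property. -/
def z0 (a κ μ : ℝ) : ℂ := Classical.epsilon (z0spec a κ μ)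

/-- `G(κ, μ)`. -/
def Gfun (a κ μ : ℝ) : ℝ :=
  let z := z0 a κ μ
  let R := ‖z‖
  let X := z.re
  let Y := z.im
  let A1 := ‖z + (a:ℂ)‖
  let A2 := ‖z - 1/(a:ℂ)‖
  (μ-κ)/2 * (Real.log (4*R^2/(Y*(R+X))) - (X/R)*Real.log ((R+X)/Y))
  - (1-μ)/2 * (Real.log ((R*A2 + X/a - R^2)/((Y/2)*(A2 + 1/a - X)))
      + ((X - 1/a)/A2)*Real.log ((R+X)/Y))
  - μ/2 * (Real.log ((R*A1 + R^2 + a*X)/((Y/2)*(A1 + a + X)))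
      - ((X+a)/A1)*Real.log ((R+X)/Y))

/-- `H(κ, μ)`. -/
def Hfun (a : ℝ) (ε : ℕ) (κ μ : ℝ) : ℝ :=
  let z := z0 a κ μ
  let R := ‖z‖
  let X := z.re
  let Y := z.im
  let A2 := ‖z - 1/(a:ℂ)‖
  (ε:ℝ)/2 * Real.log ((a*Y^2/(2*(A2 + X - 1/a))) * ((R + A2 - 1/a)/(R + 1/a - A2))
      * ((R+X)/(R-X)))
  + Real.log (2*R/(R+X)) + Real.log (Real.cos (Complex.arg z / 2))

/-- `F(κ, μ)` (the 1/N-order coefficient in the ratio asymptotics). -/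
def Ffun (a : ℝ) (ε : ℕ) (κ μ : ℝ) : ℝ :=
  let z := z0 a κ μ
  let R := ‖z‖
  let Y := z.im
  let A2 := ‖z - 1/(a:ℂ)‖
  let γ : ℝ := (μ-κ)/((1-μ+κ)*R)
  let Q : ℂ → ℂ := fun w => (((κ+1-μ)/2 : ℝ) : ℂ) * (w - (γ:ℂ))/(w*(w+(a:ℂ))*(w-1/(a:ℂ)))
  let e0 : ℂ := -(((Real.sqrt 2 * Real.sqrt Y : ℝ)) : ℂ) * Q z
  let e1 : ℂ := (2/5 : ℂ) * deriv Q z / Q z - Complex.I/(10*(Y:ℂ))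
  let g1 : ℂ := Complex.exp (Complex.I * (Real.pi : ℂ) / 4) *
      (((Real.sqrt 2 * Real.sqrt Y : ℝ)) : ℂ) *
      (1/(z + (R:ℂ)) + (ε:ℂ)/(1/(a:ℂ) - z + (A2:ℂ)))
  let M1 : ℂ := 5/(12*z^2*e0) + (5/8)*e1/(z*e0) - g1^2/(z*e0)
  let t := Real.tan (Complex.arg z / 2)
  (Real.sqrt Y/(2*Real.sqrt 2)) * (t * M1.im - M1.re)
  - ((3/16)/(z*e0)).im/(2*Real.sqrt 2*Real.sqrt Y)
  + t * (((19/48)/(z*e0)).im/(2*Real.sqrt 2*Real.sqrt Y)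
      + (Complex.exp (-(Complex.I * (Real.pi : ℂ) / 4))*g1/(2*z*e0)).im)

/-- `C₂(κ, μ)`. -/
def C2fun (a κ μ : ℝ) : ℝ :=
  (1/2 - μ + μ^2)*Real.log (1+a^2) + ∫ κ' in (0:ℝ)..κ, Gfun a κ' μ

/-- `C₁(κ, μ)`. -/
def C1fun (a : ℝ) (ε : ℕ) (κ μ : ℝ) : ℝ :=
  (∫ κ' in (0:ℝ)..κ, Hfun a ε κ' μ) - phi0 a μ (x0 a μ)/2 + (1/2 - (ε:ℝ)*μ)*Real.log (1+a^2)

/-- `C₀(κ, μ)`. -/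
def C0fun (a : ℝ) (ε : ℕ) (κ μ : ℝ) : ℝ :=
  (∫ κ' in (0:ℝ)..κ, (Ffun a ε κ' μ - 1/(12*κ'))) + (1/12)*Real.log κ
  - (1/24)*deriv (fun s => Gfun a s μ) κ
  - (1/6)*Real.log (|x0 a μ|^2 * phi0'' a μ)
  - (ε:ℝ)/2*Real.log (1 - a*(x0 a μ)) + zetaDerivNeg1

end

set_option maxHeartbeats 2000000 in
/-- the double saddle point `x*` of `φ(·;κ₂)` and the
constant `c*`. -/
theorem double_saddle_point_xstar
    (a : ℝ) (ha : 0 < a) (ha1 : a ≤ 1) (μ : ℝ)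
    (hμ : a^2/(1+a^2) < μ) (hμ1 : μ < 1) :
    let φ : ℝ → ℝ := fun x =>
      (kappa2 a μ - μ)*Real.log x + (1-μ)*Real.log (1-a*x) + μ*Real.log (x+a)
    (0 < xstar a μ ∧ xstar a μ < 1/a) ∧
    ((1+a^2)*μ ≠ 1 →
      xstar a μ = (a - (1+a^2)*Real.sqrt (μ*(1-μ)))/((1+a^2)*μ - 1)) ∧
    deriv φ (xstar a μ) = 0 ∧
    iteratedDeriv 2 φ (xstar a μ) = 0 ∧
    iteratedDeriv 3 φ (xstar a μ) < 0 ∧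
    0 < cstar a μ ∧
    cstar a μ = -(xstar a μ)^3 * iteratedDeriv 3 φ (xstar a μ) / 2 := by
  intro φ
  have ht : (0:ℝ) < 1 + a^2 := by positivity
  have hμ0 : 0 < μ := lt_trans (by positivity) hμ
  have h1μ0 : 0 < 1 - μ := by linarith
  set p := Real.sqrt μ with hpdef
  set q := Real.sqrt (1 - μ) with hqdef
  have hp0 : 0 < p := Real.sqrt_pos.mpr hμ0
  have hq0 : 0 < q := Real.sqrt_pos.mpr h1μ0
  have hp2 : p^2 = μ := Real.sq_sqrt hμ0.le
  have hq2 : q^2 = 1 - μ := Real.sq_sqrt h1μ0.le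
  have hpq : Real.sqrt (μ*(1-μ)) = p * q := Real.sqrt_mul hμ0.le _
  have hq' : q^2 = 1 - p^2 := by rw [hq2, hp2]
  have haq : a*q < p := by
    have h1 : a^2 < μ * (1+a^2) := (div_lt_iff₀ ht).mp hμ
    have h2 : (a*q)^2 < p^2 := by nlinarith
    exact lt_of_pow_lt_pow_left₀ 2 hp0.le h2
  have hm : 0 < p - a*q := by linarith
  have hd : 0 < a*p + q := by positivity
  -- κ₂ facts
  set K := kappa2 a μ with hKdef
  have hKv : K = p^2 - (p - a*q)^2/(1+a^2) := by
    rw [hKdef]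
    simp only [kappa2]
    rw [hpq, ← hp2]
    rw [show (2:ℝ)*p^2 - 1 = p^2 - q^2 by linarith [hq']]
    field_simp
    ring
  have hKμ : K - μ = -((p - a*q)^2)/(1+a^2) := by
    rw [hKv, ← hp2]; ring
  -- x* facts
  set X := xstar a μ with hXdef
  have hnum : K + a^2*(2*μ - K - 1) = 2*a*((a*p+q)*(p - a*q))/(1+a^2) := by
    rw [hKv, ← hp2]
    rw [show (2:ℝ)*p^2 - (p^2 - (p - a*q)^2/(1+a^2)) - 1 =
      -q^2 + (p - a*q)^2/(1+a^2) by linarith [hq']]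
    field_simp
    ring
  have hden : 1 + K - μ = (a*p+q)^2/(1+a^2) := by
    rw [hKv, ← hp2]
    rw [show (1:ℝ) + (p^2 - (p - a*q)^2/(1+a^2)) - p^2 =
      (p^2 + q^2) - (p - a*q)^2/(1+a^2) by linarith [hq']]
    field_simp
    ring
  have hXv : X = (p - a*q)/(a*p + q) := by
    rw [hXdef]
    simp only [xstar, ← hKdef]
    rw [hnum, hden]
    field_simp
  have hX0 : 0 < X := by rw [hXv]; positivity
  have hXlt : X < 1/a := by
    rw [hXv, div_lt_div_iff₀ hd ha]
    nlinarith [mul_pos (mul_pos ha ha) hq0]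
  have h1ax : 1 - a*X = q*(1+a^2)/(a*p+q) := by
    rw [hXv]; field_simp; ring
  have hXa2 : X + a = p*(1+a^2)/(a*p+q) := by
    rw [hXv]; field_simp; ring
  -- alternative formula for x*
  have hAlt : (1+a^2)*μ ≠ 1 →
      X = (a - (1+a^2)*Real.sqrt (μ*(1-μ)))/((1+a^2)*μ - 1) := by
    intro h
    have h2 : (1+a^2)*p^2 - 1 ≠ 0 := by
      rw [hp2]; intro hc; exact h (by linarith)
    rw [hXv, hpq, ← hp2]
    rw [div_eq_div_iff hd.ne' h2]
    linear_combination (1+a^2)*p*hq'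
  -- the function and its derivatives
  have hφdef : φ = fun x => (K - μ) * Real.log x + (1 - μ) * Real.log (1 - a*x)
      + μ * Real.log (x + a) := by rw [hKdef]
  clear_value φ
  have hXU : X ∈ Set.Ioo (0:ℝ) (1/a) := ⟨hX0, hXlt⟩
  clear_value p q K X
  have hder1 : ∀ x ∈ Set.Ioo (0:ℝ) (1/a), HasDerivAt φ
      ((K - μ) * x⁻¹ - a * (1 - μ) * (1 - a*x)⁻¹ + μ * (x + a)⁻¹) x := by
    intro x hx
    obtain ⟨hx0, hx1⟩ := hx
    have hax : 0 < 1 - a*x := by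
      have : a * x < a * (1/a) := by exact mul_lt_mul_of_pos_left hx1 ha
      rw [mul_one_div_cancel ha.ne'] at this; linarith
    have hxa : 0 < x + a := by linarith
    have h2f : HasDerivAt (fun y : ℝ => 1 - a*y) (-a) x := by
      simpa using ((hasDerivAt_id x).const_mul a).const_sub 1
    have h3f : HasDerivAt (fun y : ℝ => y + a) 1 x := (hasDerivAt_id x).add_const a
    have h1 : HasDerivAt (fun y : ℝ => Real.log y) (1/x) x := by
      simpa using (hasDerivAt_id x).log hx0.ne'
    have h2 : HasDerivAt (fun y : ℝ => Real.log (1 - a*y)) (-a/(1 - a*x)) x :=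
      h2f.log hax.ne'
    have h3 : HasDerivAt (fun y : ℝ => Real.log (y + a)) (1/(x + a)) x :=
      h3f.log hxa.ne'
    have hsum := ((h1.const_mul (K - μ)).add (h2.const_mul (1 - μ))).add
      (h3.const_mul μ)
    rw [hφdef]
    refine hsum.congr_deriv ?_
    ring
  have hder2 : ∀ x ∈ Set.Ioo (0:ℝ) (1/a), HasDerivAt
      (fun y : ℝ => (K - μ) * y⁻¹ - a * (1 - μ) * (1 - a*y)⁻¹ + μ * (y + a)⁻¹)
      (-((K - μ) * (x^2)⁻¹) - a^2 * (1 - μ) * ((1 - a*x)^2)⁻¹ - μ * ((x + a)^2)⁻¹)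
      x := by
    intro x hx
    obtain ⟨hx0, hx1⟩ := hx
    have hax : 0 < 1 - a*x := by
      have : a * x < a * (1/a) := by exact mul_lt_mul_of_pos_left hx1 ha
      rw [mul_one_div_cancel ha.ne'] at this; linarith
    have hxa : 0 < x + a := by linarith
    have h2f : HasDerivAt (fun y : ℝ => 1 - a*y) (-a) x := by
      simpa using ((hasDerivAt_id x).const_mul a).const_sub 1
    have h3f : HasDerivAt (fun y : ℝ => y + a) 1 x := (hasDerivAt_id x).add_const a
    have i1 := (hasDerivAt_inv hx0.ne').const_mul (K - μ)
    have i2 := (h2f.inv hax.ne').const_mul (a * (1 - μ))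
    have i3 := (h3f.inv hxa.ne').const_mul μ
    have hsum := (i1.sub i2).add i3
    refine hsum.congr_deriv ?_
    ring
  have hder3 : ∀ x ∈ Set.Ioo (0:ℝ) (1/a), HasDerivAt
      (fun y : ℝ => -((K - μ) * (y^2)⁻¹) - a^2 * (1 - μ) * ((1 - a*y)^2)⁻¹
        - μ * ((y + a)^2)⁻¹)
      (2 * (K - μ) * (x^3)⁻¹ - 2 * a^3 * (1 - μ) * ((1 - a*x)^3)⁻¹
        + 2 * μ * ((x + a)^3)⁻¹)
      x := by
    intro x hx
    obtain ⟨hx0, hx1⟩ := hx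
    have hax : 0 < 1 - a*x := by
      have : a * x < a * (1/a) := by exact mul_lt_mul_of_pos_left hx1 ha
      rw [mul_one_div_cancel ha.ne'] at this; linarith
    have hxa : 0 < x + a := by linarith
    have h2f : HasDerivAt (fun y : ℝ => 1 - a*y) (-a) x := by
      simpa using ((hasDerivAt_id x).const_mul a).const_sub 1
    have h3f : HasDerivAt (fun y : ℝ => y + a) 1 x := (hasDerivAt_id x).add_const a
    have j1 := (((hasDerivAt_pow 2 x).inv (pow_ne_zero 2 hx0.ne')).const_mul
      (K - μ)).neg
    have j2 := ((h2f.pow 2).inv (pow_ne_zero 2 hax.ne')).const_mul (a^2 * (1 - μ))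
    have j3 := ((h3f.pow 2).inv (pow_ne_zero 2 hxa.ne')).const_mul μ
    have hsum := (j1.sub j2).sub j3
    refine hsum.congr_deriv ?_
    simp only [Pi.pow_apply]
    generalize hu : 1 - a*x = u at *
    have hu0 : u ≠ 0 := hax.ne'
    field_simp
    ring
  -- derivative chain via local identity
  have hU : IsOpen (Set.Ioo (0:ℝ) (1/a)) := isOpen_Ioo
  have hEqOn1 : Set.EqOn (deriv φ)
      (fun y : ℝ => (K - μ) * y⁻¹ - a * (1 - μ) * (1 - a*y)⁻¹ + μ * (y + a)⁻¹)
      (Set.Ioo (0:ℝ) (1/a)) := fun x hx => (hder1 x hx).deriv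
  have hEqOn2 : Set.EqOn (deriv (deriv φ))
      (fun y : ℝ => -((K - μ) * (y^2)⁻¹) - a^2 * (1 - μ) * ((1 - a*y)^2)⁻¹
        - μ * ((y + a)^2)⁻¹)
      (Set.Ioo (0:ℝ) (1/a)) := by
    intro x hx
    have hev : deriv φ =ᶠ[nhds x]
        (fun y : ℝ => (K - μ) * y⁻¹ - a * (1 - μ) * (1 - a*y)⁻¹ + μ * (y + a)⁻¹) :=
      Filter.eventuallyEq_of_mem (hU.mem_nhds hx) hEqOn1
    rw [hev.deriv_eq]
    exact (hder2 x hx).deriv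
  have hD2 : deriv (deriv φ) X
      = -((K - μ) * (X^2)⁻¹) - a^2 * (1 - μ) * ((1 - a*X)^2)⁻¹ - μ * ((X + a)^2)⁻¹ :=
    hEqOn2 hXU
  have hD3 : deriv (deriv (deriv φ)) X
      = 2 * (K - μ) * (X^3)⁻¹ - 2 * a^3 * (1 - μ) * ((1 - a*X)^3)⁻¹
        + 2 * μ * ((X + a)^3)⁻¹ := by
    have hev : deriv (deriv φ) =ᶠ[nhds X]
        (fun y : ℝ => -((K - μ) * (y^2)⁻¹) - a^2 * (1 - μ) * ((1 - a*y)^2)⁻¹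
          - μ * ((y + a)^2)⁻¹) :=
      Filter.eventuallyEq_of_mem (hU.mem_nhds hXU) hEqOn2
    rw [hev.deriv_eq]
    exact (hder3 X hXU).deriv
  have e2 : iteratedDeriv 2 φ = deriv (deriv φ) := by
    rw [show (2:ℕ) = 1 + 1 from rfl, iteratedDeriv_succ, iteratedDeriv_one]
  have e3 : iteratedDeriv 3 φ = deriv (deriv (deriv φ)) := by
    rw [show (3:ℕ) = 2 + 1 from rfl, iteratedDeriv_succ, e2]
  -- value identities
  have hv1 : (K - μ) * X⁻¹ - a * (1 - μ) * (1 - a*X)⁻¹ + μ * (X + a)⁻¹ = 0 := by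
    rw [hKμ, ← hq2, ← hp2, h1ax, hXa2, hXv]
    field_simp
    ring
  have hv2 : -((K - μ) * (X^2)⁻¹) - a^2 * (1 - μ) * ((1 - a*X)^2)⁻¹
      - μ * ((X + a)^2)⁻¹ = 0 := by
    rw [hKμ, ← hq2, ← hp2, h1ax, hXa2, hXv]
    field_simp
    ring
  have hv3 : 2 * (K - μ) * (X^3)⁻¹ - 2 * a^3 * (1 - μ) * ((1 - a*X)^3)⁻¹
      + 2 * μ * ((X + a)^3)⁻¹
      = -(2*a*(a*p+q)^5) / ((1+a^2)^3 * (p*q*(p - a*q))) := by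
    rw [hKμ, ← hq2, ← hp2, h1ax, hXa2, hXv]
    field_simp
    ring
  have hc : cstar a μ = a*(p - a*q)^2*(a*p+q)^2 / ((1+a^2)^3*(p*q)) := by
    have hμK : μ - K = (p - a*q)^2/(1+a^2) := by linarith [hKμ]
    have h1Xa : 1/X - a = q*(1+a^2)/(p - a*q) := by
      rw [hXv]; field_simp; ring
    have h1aX : 1 + a/X = p*(1+a^2)/(p - a*q) := by
      rw [hXv]; field_simp; ring
    simp only [cstar, ← hKdef, ← hXdef]
    rw [hμK, ← hq2, ← hp2, h1Xa, h1aX]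
    field_simp
    ring
  have hden3pos : 0 < (1+a^2)^3 * (p*q*(p - a*q)) :=
    mul_pos (by positivity) (mul_pos (mul_pos hp0 hq0) hm)
  refine ⟨⟨hX0, hXlt⟩, hAlt, ?_, ?_, ?_, ?_, ?_⟩
  · rw [(hder1 X hXU).deriv]; exact hv1
  · rw [e2, hD2]; exact hv2
  · rw [e3, hD3, hv3, neg_div, neg_lt_zero]
    exact div_pos (by positivity) hden3pos
  · rw [hc]
    exact div_pos (mul_pos (mul_pos ha (pow_pos hm 2)) (pow_pos hd 2))
      (mul_pos (by positivity) (mul_pos hp0 hq0))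
  · rw [hc, e3, hD3, hv3, hXv]
    field_simp
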